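/- arXiv:2510.06979 — 3 statements merged into one kernel-verified Lean document; each statement's English description precedes it below -/
import Mathlib

section
/- Let w : ℝ^{n+1} × (0,∞) → ℝ be smooth and caloric on an open set U ⊆ ℝ^{n+1} × (0,∞), with |∇w(x,t)| ≤ 1 on U, let ε > 0, and set g(x,t) = tanh(w(x,t)/ε). Then g is a sub-solution of the ε-Allen–Cahn equation on {(x,t) ∈ U : w(x,t) > 0}, i.e. ∂ₜg − Δg + ε⁻² f(g) ≤ 0 there, and g is a super-solution on {(x,t) ∈ U : w(x,t) < 0}, i.e. ∂ₜg − Δg + ε⁻² f(g) ≥ 0 there, where f(u) = 2u(u²−1). -/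
/-! With `φ s = tanh (s / ε)` one has `φ' = (1 - φ²) / ε` and `φ'' = ε⁻² f(φ)`: `φ` is the
one-dimensional standing wave of the Allen–Cahn equation. By the chain rule `g = φ ∘ w` satisfies
`∂ₜg - Δg = φ'(w) (∂ₜw - Δw) - φ''(w) |∇w|²`, so for caloric `w` the Allen–Cahn residual of `g` is
`ε⁻² f(g) (1 - |∇w|²)`. The second factor is nonnegative because `|∇w| ≤ 1`, and since `|g| < 1`
the first has the sign opposite to that of `g`, which is the sign of `w`. -/

open MeasureTheory Set

noncomputable section

/-- `ℝ^{n+1}` as a Euclidean space. -/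
abbrev Euc (n : ℕ) := EuclideanSpace ℝ (Fin (n + 1))

/-- The spatial Laplacian: sum of second derivatives in coordinate directions. -/
def lap (n : ℕ) (f : Euc n → ℝ) (x : Euc n) : ℝ :=
  ∑ i : Fin (n + 1),
    fderiv ℝ (fun y => fderiv ℝ f y (EuclideanSpace.single i 1)) x (EuclideanSpace.single i 1)

/-- The Allen–Cahn nonlinearity `f(u) = 2u(u²-1)`, the derivative of `F(u) = ½(1-u²)²`. -/
def acF (u : ℝ) : ℝ := 2 * u * (u ^ 2 - 1)

namespace Real

theorem hasDerivAt_tanh (x : ℝ) : HasDerivAt tanh (1 - tanh x ^ 2) x := by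
  have h := (hasDerivAt_sinh x).div (hasDerivAt_cosh x) (cosh_pos x).ne'
  rw [show sinh / cosh = tanh from funext fun y => (tanh_eq_sinh_div_cosh y).symm] at h
  refine h.congr_deriv ?_
  have hcosh := (cosh_pos x).ne'
  rw [tanh_eq_sinh_div_cosh]
  field_simp

theorem tanh_pos_iff {x : ℝ} : 0 < tanh x ↔ 0 < x := by
  rw [tanh_eq_sinh_div_cosh, div_pos_iff_of_pos_right (cosh_pos x), sinh_pos_iff]

theorem tanh_neg_iff {x : ℝ} : tanh x < 0 ↔ x < 0 := by
  rw [← neg_pos, ← tanh_neg, tanh_pos_iff, neg_pos]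

end Real

open Real

theorem acF_nonpos {u : ℝ} (h₀ : 0 ≤ u) (h₁ : u ≤ 1) : acF u ≤ 0 := by
  unfold acF; nlinarith

theorem acF_nonneg {u : ℝ} (h₀ : -1 ≤ u) (h₁ : u ≤ 0) : 0 ≤ acF u := by
  unfold acF; nlinarith

theorem hasDerivAt_tanh_div (ε s : ℝ) :
    HasDerivAt (fun s => tanh (s / ε)) ((1 - tanh (s / ε) ^ 2) * ε⁻¹) s := by
  simpa [div_eq_mul_inv, Function.comp_def] using
    (hasDerivAt_tanh (s / ε)).comp s ((hasDerivAt_id s).div_const ε)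

theorem hasDerivAt_one_sub_tanh_div_sq_mul_inv (ε s : ℝ) :
    HasDerivAt (fun s => (1 - tanh (s / ε) ^ 2) * ε⁻¹) ((ε ^ 2)⁻¹ * acF (tanh (s / ε))) s := by
  refine ((((hasDerivAt_tanh_div ε s).pow 2).const_sub 1).mul_const ε⁻¹).congr_deriv ?_
  simp only [acF]
  ring

theorem sum_sq_fderiv_single_eq_norm_gradient_sq {ι : Type*} [Fintype ι] [DecidableEq ι]
    (f : EuclideanSpace ℝ ι → ℝ) (x : EuclideanSpace ℝ ι) :
    ∑ i, fderiv ℝ f x (EuclideanSpace.single i 1) ^ 2 = ‖gradient f x‖ ^ 2 := by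
  have hpartial (i : ι) : fderiv ℝ f x (EuclideanSpace.single i 1) = gradient f x i := by
    rw [← InnerProductSpace.toDual_symm_apply, EuclideanSpace.inner_single_right]
    simp [gradient]
  simp only [hpartial, EuclideanSpace.real_norm_sq_eq]

theorem lap_comp {n : ℕ} {φ φ' φ'' : ℝ → ℝ} (hφ : ∀ s, HasDerivAt φ (φ' s) s)
    (hφ' : ∀ s, HasDerivAt φ' (φ'' s) s) {h : Euc n → ℝ} {x : Euc n} (hh : ContDiffAt ℝ 2 h x) :
    lap n (fun y => φ (h y)) x = φ'' (h x) * ‖gradient h x‖ ^ 2 + φ' (h x) * lap n h x := by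
  have hfderiv_comp : fderiv ℝ (fun y => φ (h y)) =ᶠ[nhds x] fun y => φ' (h y) • fderiv ℝ h y := by
    filter_upwards [hh.eventually (by simp)] with y hy
    exact ((hφ (h y)).comp_hasFDerivAt y (hy.differentiableAt two_ne_zero).hasFDerivAt).fderiv
  have hφ'h : HasFDerivAt (fun y => φ' (h y)) (φ'' (h x) • fderiv ℝ h x) x :=
    (hφ' (h x)).comp_hasFDerivAt x (hh.differentiableAt two_ne_zero).hasFDerivAt
  have hpartial (i : Fin (n + 1)) :
      DifferentiableAt ℝ (fun y => fderiv ℝ h y (EuclideanSpace.single i 1)) x :=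
    ((hh.fderiv_right le_rfl).clm_apply contDiffAt_const).differentiableAt one_ne_zero
  rw [← sum_sq_fderiv_single_eq_norm_gradient_sq, lap, lap, Finset.mul_sum, Finset.mul_sum,
    ← Finset.sum_add_distrib]
  refine Finset.sum_congr rfl fun i _ => ?_
  have hslice : (fun y => fderiv ℝ (fun z => φ (h z)) y (EuclideanSpace.single i 1))
      =ᶠ[nhds x] fun y => φ' (h y) * fderiv ℝ h y (EuclideanSpace.single i 1) :=
    hfderiv_comp.mono fun y hy => by simp [hy]
  rw [hslice.fderiv_eq, fderiv_fun_mul hφ'h.differentiableAt (hpartial i), hφ'h.fderiv]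
  simp only [add_apply, smul_apply, smul_eq_mul]
  ring

def allenCahnResidual (n : ℕ) (ε : ℝ) (g : Euc n × ℝ → ℝ) (p : Euc n × ℝ) : ℝ :=
  deriv (fun s => g (p.1, s)) p.2 - lap n (fun y => g (y, p.2)) p.1 + (ε ^ 2)⁻¹ * acF (g p)

theorem allenCahnResidual_tanh_div {n : ℕ} {w : Euc n × ℝ → ℝ} {p : Euc n × ℝ}
    (hw : ContDiffAt ℝ 2 w p)
    (hcaloric : deriv (fun s => w (p.1, s)) p.2 = lap n (fun y => w (y, p.2)) p.1) (ε : ℝ) :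
    allenCahnResidual n ε (fun q => tanh (w q / ε)) p
      = (ε ^ 2)⁻¹ * acF (tanh (w p / ε)) * (1 - ‖gradient (fun y => w (y, p.2)) p.1‖ ^ 2) := by
  have hspace : ContDiffAt ℝ 2 (fun y => w (y, p.2)) p.1 :=
    hw.comp p.1 (contDiffAt_id.prodMk contDiffAt_const)
  have htime : DifferentiableAt ℝ (fun s => w (p.1, s)) p.2 :=
    (hw.comp p.2 (contDiffAt_const.prodMk contDiffAt_id)).differentiableAt two_ne_zero
  have hderiv : deriv (fun s => tanh (w (p.1, s) / ε)) p.2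
      = (1 - tanh (w p / ε) ^ 2) * ε⁻¹ * deriv (fun s => w (p.1, s)) p.2 :=
    ((hasDerivAt_tanh_div ε _).comp p.2 htime.hasDerivAt).deriv
  rw [allenCahnResidual, hderiv,
    lap_comp (hasDerivAt_tanh_div ε) (hasDerivAt_one_sub_tanh_div_sq_mul_inv ε) hspace, hcaloric]
  ring

theorem stmt4_general (n : ℕ) (w : Euc n × ℝ → ℝ) (U : Set (Euc n × ℝ))
    (hUopen : IsOpen U)
    (hsmooth : ContDiffOn ℝ ((⊤ : ℕ∞) : WithTop ℕ∞) w U)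
    (hcaloric : ∀ p ∈ U, deriv (fun s => w (p.1, s)) p.2 = lap n (fun y => w (y, p.2)) p.1)
    (hgrad : ∀ p ∈ U, ‖gradient (fun y => w (y, p.2)) p.1‖ ≤ 1)
    (ε : ℝ) (hε : 0 < ε) :
    (∀ p ∈ U, 0 < w p →
      deriv (fun s => Real.tanh (w (p.1, s) / ε)) p.2
          - lap n (fun y => Real.tanh (w (y, p.2) / ε)) p.1
          + (ε ^ 2)⁻¹ * acF (Real.tanh (w p / ε)) ≤ 0) ∧
    (∀ p ∈ U, w p < 0 →
      0 ≤ deriv (fun s => Real.tanh (w (p.1, s) / ε)) p.2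
          - lap n (fun y => Real.tanh (w (y, p.2) / ε)) p.1
          + (ε ^ 2)⁻¹ * acF (Real.tanh (w p / ε))) := by
  have hresidual (p) (hp : p ∈ U) := allenCahnResidual_tanh_div
    ((hsmooth.contDiffAt (hUopen.mem_nhds hp)).of_le (WithTop.coe_le_coe.2 le_top)) (hcaloric p hp) ε
  have hgrad_sq (p) (hp : p ∈ U) : 0 ≤ 1 - ‖gradient (fun y => w (y, p.2)) p.1‖ ^ 2 :=
    sub_nonneg.2 (pow_le_one₀ (norm_nonneg _) (hgrad p hp))
  refine ⟨fun p hp hw => (hresidual p hp).trans_le ?_, fun p hp hw => (hresidual p hp).ge.trans' ?_⟩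
  · have hg : acF (tanh (w p / ε)) ≤ 0 :=
      acF_nonpos (tanh_pos_iff.2 (div_pos hw hε)).le (tanh_lt_one _).le
    exact mul_nonpos_of_nonpos_of_nonneg (mul_nonpos_of_nonneg_of_nonpos (by positivity) hg)
      (hgrad_sq p hp)
  · have hg : 0 ≤ acF (tanh (w p / ε)) :=
      acF_nonneg (neg_one_lt_tanh _).le (tanh_neg_iff.2 (div_neg_of_neg_of_pos hw hε)).le
    exact mul_nonneg (mul_nonneg (by positivity) hg) (hgrad_sq p hp)

theorem stmt4 (n : ℕ) (w : Euc n × ℝ → ℝ) (U : Set (Euc n × ℝ))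
    (hUopen : IsOpen U) (hUt : ∀ p ∈ U, 0 < p.2)
    (hsmooth : ContDiffOn ℝ ((⊤ : ℕ∞) : WithTop ℕ∞) w U)
    (hcaloric : ∀ p ∈ U, deriv (fun s => w (p.1, s)) p.2 = lap n (fun y => w (y, p.2)) p.1)
    (hgrad : ∀ p ∈ U, ‖gradient (fun y => w (y, p.2)) p.1‖ ≤ 1)
    (ε : ℝ) (hε : 0 < ε) :
    (∀ p ∈ U, 0 < w p →
      deriv (fun s => Real.tanh (w (p.1, s) / ε)) p.2
          - lap n (fun y => Real.tanh (w (y, p.2) / ε)) p.1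
          + (ε ^ 2)⁻¹ * acF (Real.tanh (w p / ε)) ≤ 0) ∧
    (∀ p ∈ U, w p < 0 →
      0 ≤ deriv (fun s => Real.tanh (w (p.1, s) / ε)) p.2
          - lap n (fun y => Real.tanh (w (y, p.2) / ε)) p.1
          + (ε ^ 2)⁻¹ * acF (Real.tanh (w p / ε))) :=
  stmt4_general n w U hUopen hsmooth hcaloric hgrad ε hε

end
end

section
/- Let w : ℝ^{n+1} × (0,∞) → ℝ be smooth and caloric on an open set U ⊆ ℝ^{n+1} × (0,∞), let α > 0, and set ψ(x,t) = t⁻¹ exp(−α w(x,t)²/t). Then on U one has the identity ∂ₜψ − Δψ = [ (2α|∇w|² − 1)/t² + α w² (1 − 4α|∇w|²)/t³ ] · exp(−α w²/t), where ∇, Δ are the spatial gradient and Laplacian. -/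
open MeasureTheory Set

noncomputable section

/-!
For fixed `t`, `ψ(·, t)` is `g ∘ w(·, t)` with `g u = t⁻¹ exp (-α u² / t)`, so the chain rule gives
`Δψ = g'(w) Δw + g''(w) |∇w|²`, while `∂ₜψ` contains the term `g'(w) ∂ₜw`. The caloric equation
`∂ₜw = Δw` cancels these two terms, and what remains is the explicit factor in front of
`exp (-α w² / t)`.
-/

open Filter Topology

theorem EuclideanSpace.gradient_apply {ι : Type*} [Fintype ι] [DecidableEq ι]
    (f : EuclideanSpace ℝ ι → ℝ) (x : EuclideanSpace ℝ ι) (i : ι) :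
    gradient f x i = fderiv ℝ f x (EuclideanSpace.single i 1) := by
  rw [← inner_gradient_left, EuclideanSpace.inner_single_right]
  simp

theorem EuclideanSpace.norm_gradient_sq {ι : Type*} [Fintype ι] [DecidableEq ι]
    (f : EuclideanSpace ℝ ι → ℝ) (x : EuclideanSpace ℝ ι) :
    ‖gradient f x‖ ^ 2 = ∑ i, fderiv ℝ f x (EuclideanSpace.single i 1) ^ 2 := by
  simp only [EuclideanSpace.real_norm_sq_eq, EuclideanSpace.gradient_apply]

theorem fderiv_fderiv_comp_apply {E : Type*} [NormedAddCommGroup E] [NormedSpace ℝ E]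
    {f : E → ℝ} {g g' : ℝ → ℝ} {g'' : ℝ} {x v : E}
    (hf : ∀ᶠ y in 𝓝 x, DifferentiableAt ℝ f y)
    (hfv : DifferentiableAt ℝ (fun y => fderiv ℝ f y v) x)
    (hg : ∀ u, HasDerivAt g (g' u) u) (hg' : HasDerivAt g' g'' (f x)) :
    fderiv ℝ (fun y => fderiv ℝ (g ∘ f) y v) x v
      = g' (f x) * fderiv ℝ (fun y => fderiv ℝ f y v) x v + g'' * fderiv ℝ f x v ^ 2 := by
  have hfirst : (fun y => fderiv ℝ (g ∘ f) y v) =ᶠ[𝓝 x] fun y => g' (f y) * fderiv ℝ f y v := by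
    filter_upwards [hf] with y hy
    rw [((hg (f y)).comp_hasFDerivAt y hy.hasFDerivAt).fderiv]
    simp
  have hg'f : HasFDerivAt (fun y => g' (f y)) (g'' • fderiv ℝ f x) x :=
    hg'.comp_hasFDerivAt x (hf.self_of_nhds.hasFDerivAt)
  rw [hfirst.fderiv_eq, fderiv_fun_mul hg'f.differentiableAt hfv, hg'f.fderiv]
  simp only [add_apply, smul_apply, smul_eq_mul]
  ring

theorem lap_comp_s8 {n : ℕ} {f : Euc n → ℝ} {g g' : ℝ → ℝ} {g'' : ℝ} {x : Euc n}
    (hf : ContDiffAt ℝ 2 f x)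
    (hg : ∀ u, HasDerivAt g (g' u) u) (hg' : HasDerivAt g' g'' (f x)) :
    lap n (g ∘ f) x = g' (f x) * lap n f x + g'' * ‖gradient f x‖ ^ 2 := by
  have hdiff : ∀ᶠ y in 𝓝 x, DifferentiableAt ℝ f y :=
    (hf.eventually (by simp)).mono fun y hy => hy.differentiableAt (by simp)
  have hf' : DifferentiableAt ℝ (fderiv ℝ f) x :=
    (hf.fderiv_right (m := 1) (by norm_num)).differentiableAt one_ne_zero
  simp only [lap, EuclideanSpace.norm_gradient_sq, Finset.mul_sum, ← Finset.sum_add_distrib]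
  refine Finset.sum_congr rfl fun i _ => ?_
  exact fderiv_fderiv_comp_apply hdiff (hf'.clm_apply (differentiableAt_const _)) hg hg'

/-- `ψ (x, t) = gaussWeight α t (w (x, t))`. -/
def gaussWeight (α t u : ℝ) : ℝ := t⁻¹ * Real.exp (-α * u ^ 2 / t)

theorem hasDerivAt_gaussWeight (α t u : ℝ) :
    HasDerivAt (gaussWeight α t) (-(2 * α * u / t ^ 2) * Real.exp (-α * u ^ 2 / t)) u :=
  ((((hasDerivAt_pow 2 u).const_mul (-α)).div_const t).exp.const_mul t⁻¹).congr_deriv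
    (by field_simp; ring)

theorem hasDerivAt_deriv_gaussWeight (α t u : ℝ) :
    HasDerivAt (fun v => -(2 * α * v / t ^ 2) * Real.exp (-α * v ^ 2 / t))
      ((4 * α ^ 2 * u ^ 2 / t ^ 3 - 2 * α / t ^ 2) * Real.exp (-α * u ^ 2 / t)) u :=
  ((((hasDerivAt_id u).const_mul (2 * α)).div_const (t ^ 2)).fun_neg.fun_mul
    (((hasDerivAt_pow 2 u).const_mul (-α)).div_const t).exp).congr_deriv
    (by simp only [id]; field_simp; ring)

theorem HasDerivAt.gaussWeight {α t u' : ℝ} {u : ℝ → ℝ} (ht : t ≠ 0) (hu : HasDerivAt u u' t) :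
    HasDerivAt (fun s => gaussWeight α s (u s))
      ((-1 / t ^ 2 + α * u t ^ 2 / t ^ 3 - 2 * α * u t * u' / t ^ 2)
        * Real.exp (-α * u t ^ 2 / t)) t :=
  ((hasDerivAt_inv ht).fun_mul
    (((hu.fun_pow 2).const_mul (-α)).fun_div (hasDerivAt_id t) ht).exp).congr_deriv
    (by simp only [id]; field_simp; ring)

theorem stmt8_general (n : ℕ) (w : Euc n × ℝ → ℝ) (U : Set (Euc n × ℝ))
    (hUopen : IsOpen U) (hUt : ∀ p ∈ U, 0 < p.2)
    (hsmooth : ContDiffOn ℝ ((⊤ : ℕ∞) : WithTop ℕ∞) w U)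
    (hcaloric : ∀ p ∈ U, deriv (fun s => w (p.1, s)) p.2 = lap n (fun y => w (y, p.2)) p.1)
    (α : ℝ) :
    ∀ p ∈ U,
      deriv (fun s => s⁻¹ * Real.exp (-α * (w (p.1, s)) ^ 2 / s)) p.2
          - lap n (fun y => p.2⁻¹ * Real.exp (-α * (w (y, p.2)) ^ 2 / p.2)) p.1
        = ((2 * α * ‖gradient (fun y => w (y, p.2)) p.1‖ ^ 2 - 1) / p.2 ^ 2
            + α * (w p) ^ 2 * (1 - 4 * α * ‖gradient (fun y => w (y, p.2)) p.1‖ ^ 2) / p.2 ^ 3)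
            * Real.exp (-α * (w p) ^ 2 / p.2) := by
  rintro ⟨x, t⟩ hp
  have ht : t ≠ 0 := (hUt _ hp).ne'
  have hw : ContDiffAt ℝ 2 w (x, t) :=
    (hsmooth.contDiffAt (hUopen.mem_nhds hp)).of_le (by norm_cast)
  have hspace : ContDiffAt ℝ 2 (fun y => w (y, t)) x :=
    hw.comp x (contDiffAt_id.prodMk contDiffAt_const)
  have htime : HasDerivAt (fun s => w (x, s)) (lap n (fun y => w (y, t)) x) t := by
    rw [← hcaloric _ hp]
    exact ((hw.differentiableAt two_ne_zero).comp t
      ((differentiableAt_const x).prodMk differentiableAt_id)).hasDerivAt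
  show deriv (fun s => gaussWeight α s (w (x, s))) t
      - lap n (gaussWeight α t ∘ fun y => w (y, t)) x = _
  rw [(htime.gaussWeight ht).deriv,
    lap_comp_s8 hspace (hasDerivAt_gaussWeight α t) (hasDerivAt_deriv_gaussWeight α t _)]
  field_simp
  ring

theorem stmt8 (n : ℕ) (w : Euc n × ℝ → ℝ) (U : Set (Euc n × ℝ))
    (hUopen : IsOpen U) (hUt : ∀ p ∈ U, 0 < p.2)
    (hsmooth : ContDiffOn ℝ ((⊤ : ℕ∞) : WithTop ℕ∞) w U)
    (hcaloric : ∀ p ∈ U, deriv (fun s => w (p.1, s)) p.2 = lap n (fun y => w (y, p.2)) p.1)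
    (α : ℝ) (hα : 0 < α) :
    ∀ p ∈ U,
      deriv (fun s => s⁻¹ * Real.exp (-α * (w (p.1, s)) ^ 2 / s)) p.2
          - lap n (fun y => p.2⁻¹ * Real.exp (-α * (w (y, p.2)) ^ 2 / p.2)) p.1
        = ((2 * α * ‖gradient (fun y => w (y, p.2)) p.1‖ ^ 2 - 1) / p.2 ^ 2
            + α * (w p) ^ 2 * (1 - 4 * α * ‖gradient (fun y => w (y, p.2)) p.1‖ ^ 2) / p.2 ^ 3)
            * Real.exp (-α * (w p) ^ 2 / p.2) :=
  stmt8_general n w U hUopen hUt hsmooth hcaloric α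
end
end

section
/- Let M ⊂ ℝ^{n+1} be a nonempty compact set, let d(x) = dist(x,M), and suppose there is A > 0 such that H^n({x : d(x) = s}) ≤ A·max(1, s^n) for almost every s > 0. Then there exists a constant C > 0 depending only on n such that for every t ∈ (0,1), ∫_{ℝ^{n+1} \ M} t⁻¹ exp( −d(x)²/(3t) ) dx ≤ C A / √t. -/
open MeasureTheory Set

noncomputable section

/-!
Write `d = infDist · M` and `L s = {d = s}`. A point `x` with `2 s < d x ≤ 3 s` sees, within
distance `3 s`, a piece of `L s` of `H^n`-measure `≳ s^n`: slide from the nearest point of `M`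
towards `x` and sideways in the orthogonal hyperplane, and project that hyperplane to `ℝ^n`.
A Vitali covering turns this into `|{2 s < d ≤ 3 s}| ≲ s · H^n(L s) ≲ A s max(1, s^n)`.
Every `x ∉ M` lies in the shells `2 s < d x ≤ 3 s` for `s ∈ [d x / 3, d x / 2)`, so by Tonelli
the integral is `≲ A t⁻¹ ∫₀^∞ max(1, s^n) e^{-4 s² / 3t} ds ≲ A / √t`.
-/

open Metric Module
open scoped ENNReal RealInnerProductSpace Nat

section InnerProduct

variable {E : Type*} [NormedAddCommGroup E] [InnerProductSpace ℝ E]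

lemma norm_smul_add_sq_of_inner_eq_zero {e w : E} (he : ‖e‖ = 1) (hw : ⟪e, w⟫ = 0) (a : ℝ) :
    ‖a • e + w‖ ^ 2 = a ^ 2 + ‖w‖ ^ 2 := by
  rw [norm_add_sq_real, real_inner_smul_left, hw, norm_smul, he]
  simp [sq_abs]

/-- Intermediate value theorem for `τ ∈ [s/2, 3s/2]`: at `τ = s/2` the point is within `s` of
`p ∈ M`, at `τ = 3s/2` it is within `r - s` of `p + r • e`. -/
lemma exists_infDist_eq_of_inner_eq_zero {M : Set E} {p e w : E} {r s : ℝ} (hp : p ∈ M)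
    (he : ‖e‖ = 1) (hr : infDist (p + r • e) M = r) (hs : 0 < s) (hsr : 2 * s ≤ r)
    (hw : ⟪e, w⟫ = 0) (hws : ‖w‖ ≤ s / 4) :
    ∃ τ : ℝ, infDist (p + τ • e + w) M = s ∧ dist (p + τ • e + w) (p + r • e) ≤ r := by
  have hsq := norm_smul_add_sq_of_inner_eq_zero he hw
  have hdist : ∀ τ : ℝ, dist (p + τ • e + w) (p + r • e) = ‖(τ - r) • e + w‖ := by
    intro τ
    rw [dist_eq_norm, sub_smul]
    congr 1
    abel
  have hw2 : ‖w‖ ^ 2 ≤ (s / 4) ^ 2 := pow_le_pow_left₀ (norm_nonneg w) hws 2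
  have hlow : infDist (p + (s / 2) • e + w) M ≤ s :=
    calc _ ≤ dist (p + (s / 2) • e + w) p := infDist_le_dist_of_mem hp
      _ = ‖(s / 2) • e + w‖ := by rw [dist_eq_norm, add_assoc, add_sub_cancel_left]
      _ ≤ s := (sq_le_sq₀ (norm_nonneg _) hs.le).1 (by rw [hsq]; nlinarith)
  have hhigh : s ≤ infDist (p + (3 * s / 2) • e + w) M := by
    have hnear : dist (p + (3 * s / 2) • e + w) (p + r • e) ≤ r - s := by
      rw [hdist]
      exact (sq_le_sq₀ (norm_nonneg _) (by linarith)).1 (by rw [hsq]; nlinarith)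
    have := infDist_le_infDist_add_dist (x := p + r • e) (y := p + (3 * s / 2) • e + w) (s := M)
    rw [hr, dist_comm] at this
    linarith
  have hcont : Continuous fun τ : ℝ => infDist (p + τ • e + w) M :=
    (continuous_infDist_pt M).comp (by fun_prop)
  obtain ⟨τ, ⟨hτ₁, hτ₂⟩, hτ⟩ :=
    intermediate_value_Icc (by linarith) hcont.continuousOn ⟨hlow, hhigh⟩
  refine ⟨τ, hτ, ?_⟩
  rw [hdist]
  exact (sq_le_sq₀ (norm_nonneg _) (by linarith)).1 (by rw [hsq]; nlinarith)

lemma lipschitzWith_one_inner_pi {ι : Type*} [Fintype ι] {f : ι → E} (hf : ∀ i, ‖f i‖ ≤ 1) :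
    LipschitzWith 1 fun v : E => fun i => ⟪f i, v⟫ := by
  refine LipschitzWith.of_dist_le_mul fun a b => ?_
  rw [NNReal.coe_one, one_mul, dist_pi_le_iff dist_nonneg]
  intro i
  rw [Real.dist_eq, ← inner_sub_right]
  exact (abs_real_inner_le_norm _ _).trans
    (by simpa [dist_eq_norm] using mul_le_of_le_one_left (norm_nonneg _) (hf i))

lemma exists_orthonormal_inner_eq_zero {n : ℕ} (hE : finrank ℝ E = n + 1) {e : E} (he : e ≠ 0) :
    ∃ f : Fin n → E, Orthonormal ℝ f ∧ ∀ i, ⟪e, f i⟫ = 0 := by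
  have : Fact (finrank ℝ E = n + 1) := ⟨hE⟩
  let b := OrthonormalBasis.fromOrthogonalSpanSingleton (𝕜 := ℝ) n he
  exact ⟨fun i => b i, b.orthonormal.comp_linearIsometry (ℝ ∙ e)ᗮ.subtypeₗᵢ,
    fun i => Submodule.mem_orthogonal_singleton_iff_inner_right.1 (b i).2⟩

end InnerProduct

lemma LipschitzWith.volume_image_le_hausdorffMeasure {X ι : Type*} [EMetricSpace X]
    [MeasurableSpace X] [BorelSpace X] [Fintype ι] {g : X → ι → ℝ} (hg : LipschitzWith 1 g)
    (S : Set X) : volume (g '' S) ≤ μH[Fintype.card ι] S := by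
  simpa [← hausdorffMeasure_pi_real] using
    hg.hausdorffMeasure_image_le (Nat.cast_nonneg (Fintype.card ι)) S

/-- Take a disjoint Vitali subfamily of the balls `closedBall x r`, `x ∈ T`, whose doubles
cover `T`. -/
lemma measure_mul_le_of_le_measure_closedBall {E : Type*} [NormedAddCommGroup E] [ProperSpace E]
    [MeasurableSpace E] [BorelSpace E] (μ : Measure E) [μ.IsAddHaarMeasure] (ν : Measure E)
    {T : Set E} {r : ℝ} (hr : 0 < r) {m : ℝ≥0∞} (hm : ∀ x ∈ T, m ≤ ν (closedBall x r)) :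
    μ T * m ≤ μ (closedBall 0 (2 * r)) * ν univ := by
  obtain ⟨u, huT, hdisj, hcov⟩ := Vitali.exists_disjoint_subfamily_covering_enlargement
    (fun x => closedBall x r) T (fun _ => r) 2 one_lt_two (fun _ _ => hr.le) r (fun _ _ => le_rfl)
    (fun x _ => ⟨x, mem_closedBall_self hr.le⟩)
  have hu : u.Countable := hdisj.countable_of_nonempty_interior fun x _ =>
    ⟨x, ball_subset_interior_closedBall (mem_ball_self hr)⟩
  have hTu : T ⊆ ⋃ b ∈ u, closedBall b (2 * r) := by
    intro a ha
    obtain ⟨b, hbu, ⟨y, hya, hyb⟩, -⟩ := hcov a ha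
    refine mem_biUnion hbu ?_
    calc dist a b ≤ dist a y + dist y b := dist_triangle a y b
      _ ≤ r + r := add_le_add (mem_closedBall'.1 hya) (mem_closedBall.1 hyb)
      _ = 2 * r := by ring
  calc μ T * m ≤ (∑' b : u, μ (closedBall (b : E) (2 * r))) * m := by
        gcongr
        exact (measure_mono hTu).trans (measure_biUnion_le μ hu _)
    _ = μ (closedBall 0 (2 * r)) * ∑' _ : u, m := by
        rw [← ENNReal.tsum_mul_right, ← ENNReal.tsum_mul_left]
        simp only [Measure.addHaar_closedBall_center μ]
    _ ≤ μ (closedBall 0 (2 * r)) * ∑' b : u, ν (closedBall (b : E) r) := by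
        gcongr with b
        exact hm b (huT b.2)
    _ = μ (closedBall 0 (2 * r)) * ν (⋃ b ∈ u, closedBall b r) := by
        rw [measure_biUnion hu hdisj fun b _ => measurableSet_closedBall]
    _ ≤ μ (closedBall 0 (2 * r)) * ν univ := by
        gcongr
        exact subset_univ _

/-- A point at level `u > 0` lies in the shell `2 s < u ≤ 3 s` for all `s ∈ [u/3, u/2)`, an
interval over which the weight `3 / s` integrates to at least `1`. -/
lemma setLIntegral_pos_le_lintegral_shells {X : Type*} [MeasurableSpace X] (μ : Measure X)
    [SFinite μ] {d : X → ℝ} (hd : Measurable d) {g : ℝ → ℝ≥0∞} (hg : Measurable g)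
    (hg_anti : AntitoneOn g (Ioi 0)) :
    ∫⁻ x in {x | 0 < d x}, g (d x) ∂μ ≤
      ∫⁻ s in Ioi 0, ENNReal.ofReal (3 / s) * g (2 * s) * μ {x | d x ∈ Ioc (2 * s) (3 * s)} := by
  set Q : Set (X × ℝ) := {q | d q.1 ∈ Ioc (2 * q.2) (3 * q.2)}
  set G : X × ℝ → ℝ≥0∞ := Q.indicator fun q => ENNReal.ofReal (3 / q.2) * g (2 * q.2) with hG_def
  have hQ : MeasurableSet Q :=
    (measurableSet_lt (measurable_const.mul measurable_snd) (hd.comp measurable_fst)).inter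
      (measurableSet_le (hd.comp measurable_fst) (measurable_const.mul measurable_snd))
  have hG : Measurable G :=
    ((by fun_prop : Measurable fun q : X × ℝ => ENNReal.ofReal (3 / q.2)).mul
      (hg.comp (by fun_prop))).indicator hQ
  have hpt : ∀ x ∈ {x | 0 < d x}, g (d x) ≤ ∫⁻ s in Ioi 0, G (x, s) := by
    intro x (hx : 0 < d x)
    set u := d x
    calc g u = ∫⁻ _ in Ico (u / 3) (u / 2), ENNReal.ofReal (6 / u) * g u := by
          have h1 : (u / 2 - u / 3) * (6 / u) = 1 := by field_simp; ring
          rw [setLIntegral_const, Real.volume_Ico, mul_comm, ← mul_assoc,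
            ← ENNReal.ofReal_mul (by linarith), h1, ENNReal.ofReal_one, one_mul]
      _ ≤ ∫⁻ s in Ico (u / 3) (u / 2), G (x, s) := by
          refine setLIntegral_mono' measurableSet_Ico fun s ⟨hs₁, hs₂⟩ => ?_
          have hs : 0 < s := by linarith
          rw [hG_def, indicator_of_mem (show (x, s) ∈ Q from ⟨by linarith, by linarith⟩)]
          show ENNReal.ofReal (6 / u) * g u ≤ ENNReal.ofReal (3 / s) * g (2 * s)
          refine mul_le_mul' (ENNReal.ofReal_le_ofReal ?_)
            (hg_anti (show 0 < 2 * s by linarith) hx (by linarith))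
          rw [div_le_div_iff₀ hx hs]
          linarith
      _ ≤ ∫⁻ s in Ioi 0, G (x, s) :=
          lintegral_mono_set fun s hs => lt_of_lt_of_le (by positivity) hs.1
  calc ∫⁻ x in {x | 0 < d x}, g (d x) ∂μ
      ≤ ∫⁻ x in {x | 0 < d x}, (∫⁻ s in Ioi 0, G (x, s)) ∂μ :=
        setLIntegral_mono' (measurableSet_lt measurable_const hd) hpt
    _ ≤ ∫⁻ x, (∫⁻ s in Ioi 0, G (x, s)) ∂μ := setLIntegral_le_lintegral _ _
    _ = ∫⁻ s in Ioi 0, ∫⁻ x, G (x, s) ∂μ :=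
        lintegral_lintegral_swap (f := fun x s => G (x, s)) hG.aemeasurable
    _ = _ := by
        refine setLIntegral_congr_fun measurableSet_Ioi fun s _ => ?_
        exact lintegral_indicator_const (μ := μ)
          (hd (measurableSet_Ioc (a := 2 * s) (b := 3 * s))) (ENNReal.ofReal (3 / s) * g (2 * s))

lemma max_one_pow_le_factorial_mul_exp (n : ℕ) {s : ℝ} (hs : 0 ≤ s) :
    max 1 (s ^ n) ≤ n ! * Real.exp s := by
  have hn : (1 : ℝ) ≤ n ! := by exact_mod_cast Nat.one_le_of_lt (Nat.factorial_pos n)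
  refine max_le ?_ ?_
  · nlinarith [Real.one_le_exp hs]
  · have := Real.pow_div_factorial_le_exp s hs n
    rwa [div_le_iff₀ (by positivity), mul_comm] at this

lemma lintegral_Ioi_max_one_pow_mul_exp_neg_mul_sq_le (n : ℕ) {b : ℝ} (hb : 1 ≤ b) :
    ∫⁻ s in Ioi 0, ENNReal.ofReal (max 1 (s ^ n) * Real.exp (-b * s ^ 2)) ≤
      ENNReal.ofReal (n ! * Real.exp (1 / 2) * √(2 * Real.pi / b)) := by
  have hpt : ∀ s ∈ Ioi (0 : ℝ), ENNReal.ofReal (max 1 (s ^ n) * Real.exp (-b * s ^ 2)) ≤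
      ENNReal.ofReal (n ! * Real.exp (1 / 2) * Real.exp (-(b / 2) * s ^ 2)) := by
    intro s (hs : 0 < s)
    refine ENNReal.ofReal_le_ofReal ?_
    calc max 1 (s ^ n) * Real.exp (-b * s ^ 2) ≤ n ! * Real.exp s * Real.exp (-b * s ^ 2) := by
          gcongr
          exact max_one_pow_le_factorial_mul_exp n hs.le
      _ ≤ n ! * Real.exp (1 / 2) * Real.exp (-(b / 2) * s ^ 2) := by
          rw [mul_assoc, mul_assoc, ← Real.exp_add, ← Real.exp_add]
          gcongr _ * ?_
          exact Real.exp_le_exp.2 (by nlinarith [sq_nonneg (s - 1), sq_nonneg s])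
  have hb' : 0 < b / 2 := by linarith
  calc ∫⁻ s in Ioi 0, ENNReal.ofReal (max 1 (s ^ n) * Real.exp (-b * s ^ 2))
      ≤ ∫⁻ s in Ioi 0, ENNReal.ofReal (n ! * Real.exp (1 / 2) * Real.exp (-(b / 2) * s ^ 2)) :=
        setLIntegral_mono' measurableSet_Ioi hpt
    _ ≤ ∫⁻ s, ENNReal.ofReal (n ! * Real.exp (1 / 2) * Real.exp (-(b / 2) * s ^ 2)) :=
        setLIntegral_le_lintegral _ _
    _ = ENNReal.ofReal (∫ s, n ! * Real.exp (1 / 2) * Real.exp (-(b / 2) * s ^ 2)) :=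
        (ofReal_integral_eq_lintegral_ofReal ((integrable_exp_neg_mul_sq hb').const_mul _)
          (ae_of_all _ fun s => by positivity)).symm
    _ = ENNReal.ofReal (n ! * Real.exp (1 / 2) * √(2 * Real.pi / b)) := by
        rw [integral_const_mul, integral_gaussian, div_div_eq_mul_div, mul_comm Real.pi]

section LevelSets

variable {E : Type*} [NormedAddCommGroup E] [InnerProductSpace ℝ E] [FiniteDimensional ℝ E]
  [MeasurableSpace E] [BorelSpace E]

/-- With `p ∈ M` nearest to `x`, the coordinates `⟪f i, ·⟫` along an orthonormal basis of
`(x - p)ᗮ` form a 1-Lipschitz map to sup-normed `ℝ^n`, and the image of the level-set piece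
contains a cube of side `s / (2 (n + 1))`. -/
lemma ofReal_le_hausdorffMeasure_infDist_eq_inter_closedBall {n : ℕ} (hE : finrank ℝ E = n + 1)
    {M : Set E} (hM : IsClosed M) (hM' : M.Nonempty) {s : ℝ} (hs : 0 < s) {x : E}
    (h2 : 2 * s ≤ infDist x M) (h3 : infDist x M ≤ 3 * s) :
    ENNReal.ofReal ((s / (2 * (n + 1))) ^ n) ≤
      μH[n] ({y | infDist y M = s} ∩ closedBall x (3 * s)) := by
  obtain ⟨p, hpM, hp⟩ := hM.exists_infDist_eq_dist hM' x
  set r := infDist x M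
  have hr : 0 < r := by linarith
  set e : E := r⁻¹ • (x - p)
  have he : ‖e‖ = 1 := by
    rw [norm_smul, ← dist_eq_norm, ← hp, norm_inv, Real.norm_of_nonneg hr.le,
      inv_mul_cancel₀ hr.ne']
  have hx : x = p + r • e := by
    rw [smul_smul, mul_inv_cancel₀ hr.ne', one_smul, add_sub_cancel]
  obtain ⟨f, hf, hef⟩ :=
    exists_orthonormal_inner_eq_zero hE (e := e) (by simp [← norm_ne_zero_iff, he])
  set Φ : E → Fin n → ℝ := fun v i => ⟪f i, v⟫
  set ρ : ℝ := s / (4 * (n + 1))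
  have hcover : closedBall (Φ p) ρ ⊆ Φ '' ({y | infDist y M = s} ∩ closedBall x (3 * s)) := by
    intro y hy
    set w := ∑ i, (y - Φ p) i • f i
    have hw : ⟪e, w⟫ = 0 := by simp [w, inner_sum, inner_smul_right, hef]
    have hws : ‖w‖ ≤ s / 4 := by
      have hc : ‖y - Φ p‖ ≤ ρ := by rwa [← dist_eq_norm]
      calc ‖w‖ ≤ ∑ i, ‖(y - Φ p) i • f i‖ := norm_sum_le _ _
        _ ≤ ∑ _i : Fin n, ρ := by
            gcongr with i
            rw [norm_smul, hf.norm_eq_one, mul_one]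
            exact (norm_le_pi_norm _ i).trans hc
        _ ≤ s / 4 := by
            rw [Finset.sum_const, Finset.card_univ, Fintype.card_fin, nsmul_eq_mul]
            simp only [ρ]
            rw [mul_div_assoc', div_le_div_iff₀ (by positivity) (by positivity)]
            nlinarith
    obtain ⟨τ, hτ, hτx⟩ := exists_infDist_eq_of_inner_eq_zero hpM he (by rw [← hx]) hs
      (by linarith) hw hws
    refine ⟨p + τ • e + w, ⟨hτ, ?_⟩, ?_⟩
    · rw [mem_closedBall, hx]
      linarith
    · ext i
      simp [Φ, w, inner_add_right, inner_smul_right, hf.inner_right_fintype, real_inner_comm e, hef]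
  calc ENNReal.ofReal ((s / (2 * (n + 1))) ^ n) = volume (closedBall (Φ p) ρ) := by
        rw [Real.volume_pi_closedBall _ (by positivity), Fintype.card_fin]
        congr 2
        simp only [ρ]
        field_simp
        ring
    _ ≤ volume (Φ '' ({y | infDist y M = s} ∩ closedBall x (3 * s))) := measure_mono hcover
    _ ≤ μH[n] ({y | infDist y M = s} ∩ closedBall x (3 * s)) := by
        simpa using (lipschitzWith_one_inner_pi fun i => (hf.norm_eq_one i).le)
          |>.volume_image_le_hausdorffMeasure _

lemma measure_infDist_mem_Ioc_le {n : ℕ} (hE : finrank ℝ E = n + 1) (μ : Measure E)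
    [μ.IsAddHaarMeasure] {M : Set E} (hM : IsClosed M) (hM' : M.Nonempty) {s : ℝ} (hs : 0 < s) :
    μ {x | infDist x M ∈ Ioc (2 * s) (3 * s)} ≤
      ENNReal.ofReal (6 ^ (n + 1) * (2 * (n + 1)) ^ n * μ.real (ball 0 1) * s) *
        μH[n] {y | infDist y M = s} := by
  set m := ENNReal.ofReal ((s / (2 * (n + 1))) ^ n)
  have hm : m ≠ 0 := by simp [m]; positivity
  have hcover := measure_mul_le_of_le_measure_closedBall μ (μH[n].restrict {y | infDist y M = s})
    (T := {x | infDist x M ∈ Ioc (2 * s) (3 * s)}) (by positivity : 0 < 3 * s) (m := m)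
    fun x hx => by
      rw [Measure.restrict_apply measurableSet_closedBall, inter_comm]
      exact ofReal_le_hausdorffMeasure_infDist_eq_inter_closedBall hE hM hM' hs hx.1.le hx.2
  have hsplit : ENNReal.ofReal ((2 * (3 * s)) ^ (n + 1)) * μ (ball 0 1) =
      ENNReal.ofReal (6 ^ (n + 1) * (2 * (n + 1)) ^ n * μ.real (ball 0 1) * s) * m := by
    have hn : (2 * ((n : ℝ) + 1)) ^ n ≠ 0 := by positivity
    rw [← ofReal_measureReal measure_ball_lt_top.ne, ← ENNReal.ofReal_mul (by positivity),
      ← ENNReal.ofReal_mul (by positivity), div_pow]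
    congr 1
    field_simp
    ring
  rw [← ENNReal.mul_le_mul_iff_left hm ENNReal.ofReal_ne_top]
  refine hcover.trans (le_of_eq ?_)
  rw [Measure.restrict_apply_univ, Measure.addHaar_closedBall μ _ (by positivity), hE, hsplit]
  ring

lemma ofReal_mul_exp_mul_measure_infDist_mem_Ioc_le {n : ℕ} (hE : finrank ℝ E = n + 1)
    (μ : Measure E) [μ.IsAddHaarMeasure] {M : Set E} (hM : IsClosed M) (hM' : M.Nonempty)
    {A s t : ℝ} (hs : 0 < s) (ht : 0 < t)
    (hH : μH[n] {y | infDist y M = s} ≤ ENNReal.ofReal (A * max 1 (s ^ n))) :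
    ENNReal.ofReal (3 / s) * ENNReal.ofReal (t⁻¹ * Real.exp (-(2 * s) ^ 2 / (3 * t))) *
        μ {x | infDist x M ∈ Ioc (2 * s) (3 * s)} ≤
      ENNReal.ofReal (3 * (6 ^ (n + 1) * (2 * (n + 1)) ^ n * μ.real (ball 0 1)) * A / t) *
        ENNReal.ofReal (max 1 (s ^ n) * Real.exp (-(4 / (3 * t)) * s ^ 2)) := by
  calc _ ≤ ENNReal.ofReal (3 / s) * ENNReal.ofReal (t⁻¹ * Real.exp (-(2 * s) ^ 2 / (3 * t))) *
        (ENNReal.ofReal (6 ^ (n + 1) * (2 * (n + 1)) ^ n * μ.real (ball 0 1) * s) *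
          ENNReal.ofReal (A * max 1 (s ^ n))) := by
        gcongr
        exact (measure_infDist_mem_Ioc_le hE μ hM hM' hs).trans (by gcongr)
    _ = _ := by
        rw [show -(2 * s) ^ 2 / (3 * t) = -(4 / (3 * t)) * s ^ 2 by ring,
          ← ENNReal.ofReal_mul (by positivity), ← ENNReal.ofReal_mul (by positivity),
          ← ENNReal.ofReal_mul (by positivity), ← ENNReal.ofReal_mul' (by positivity)]
        congr 1
        field_simp

theorem setLIntegral_compl_exp_neg_infDist_sq_le {n : ℕ} (hE : finrank ℝ E = n + 1)
    (μ : Measure E) [μ.IsAddHaarMeasure] {M : Set E} (hM : IsClosed M) (hM' : M.Nonempty) {A : ℝ}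
    (hH : ∀ᵐ s ∂(volume.restrict (Ioi (0 : ℝ))),
      μH[n] {y | infDist y M = s} ≤ ENNReal.ofReal (A * max 1 (s ^ n)))
    {t : ℝ} (ht : 0 < t) (ht1 : t < 1) :
    ∫⁻ x in Mᶜ, ENNReal.ofReal (t⁻¹ * Real.exp (-(infDist x M) ^ 2 / (3 * t))) ∂μ ≤
      ENNReal.ofReal (3 * (6 ^ (n + 1) * (2 * (n + 1)) ^ n * μ.real (ball 0 1)) * n ! *
        Real.exp (1 / 2) * √(3 * Real.pi / 2) * A / √t) := by
  set K := 6 ^ (n + 1) * (2 * (n + 1)) ^ n * μ.real (ball 0 1)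
  set g : ℝ → ℝ≥0∞ := fun u => ENNReal.ofReal (t⁻¹ * Real.exp (-u ^ 2 / (3 * t)))
  have hg : AntitoneOn g (Ioi 0) := fun u (hu : 0 < u) v _ huv => by
    dsimp only [g]
    gcongr
  have hb : 1 ≤ 4 / (3 * t) := by rw [le_div_iff₀ (by positivity)]; linarith
  have hK : 3 * K * A / t * (n ! * Real.exp (1 / 2) * √(2 * Real.pi / (4 / (3 * t)))) =
      3 * K * n ! * Real.exp (1 / 2) * √(3 * Real.pi / 2) * A / √t := by
    rw [show 2 * Real.pi / (4 / (3 * t)) = 3 * Real.pi / 2 * t by field_simp; ring,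
      Real.sqrt_mul (by positivity)]
    field_simp
    rw [Real.sq_sqrt ht.le]
  rw [show Mᶜ = {x | 0 < infDist x M} from Set.ext fun x => hM.notMem_iff_infDist_pos hM']
  calc _ ≤ ∫⁻ s in Ioi 0, ENNReal.ofReal (3 / s) * g (2 * s) *
          μ {x | infDist x M ∈ Ioc (2 * s) (3 * s)} :=
        setLIntegral_pos_le_lintegral_shells μ (continuous_infDist_pt M).measurable
          (by fun_prop) hg
    _ ≤ ∫⁻ s in Ioi 0, ENNReal.ofReal (3 * K * A / t) *
          ENNReal.ofReal (max 1 (s ^ n) * Real.exp (-(4 / (3 * t)) * s ^ 2)) := by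
        refine lintegral_mono_ae ?_
        filter_upwards [hH, ae_restrict_mem measurableSet_Ioi] with s hs (hs0 : 0 < s)
        exact ofReal_mul_exp_mul_measure_infDist_mem_Ioc_le hE μ hM hM' hs0 ht hs
    _ ≤ ENNReal.ofReal (3 * K * A / t) *
          ENNReal.ofReal (n ! * Real.exp (1 / 2) * √(2 * Real.pi / (4 / (3 * t)))) := by
        rw [lintegral_const_mul _ (by fun_prop)]
        gcongr
        exact lintegral_Ioi_max_one_pow_mul_exp_neg_mul_sq_le n hb
    _ = _ := by rw [← ENNReal.ofReal_mul' (by positivity), hK]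

end LevelSets

theorem stmt18 (n : ℕ) :
    ∃ C > 0, ∀ (M : Set (Euc n)) (A : ℝ), M.Nonempty → IsCompact M → 0 < A →
      (∀ᵐ s ∂(volume.restrict (Ioi (0 : ℝ))),
        μH[(n : ℝ)] {x : Euc n | Metric.infDist x M = s}
          ≤ ENNReal.ofReal (A * max 1 (s ^ n))) →
      ∀ t : ℝ, 0 < t → t < 1 →
        ∫⁻ x in Mᶜ,
            ENNReal.ofReal (t⁻¹ * Real.exp (-(Metric.infDist x M) ^ 2 / (3 * t)))
          ≤ ENNReal.ofReal (C * A / Real.sqrt t) := by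
  have hball : 0 < volume.real (ball (0 : Euc n) 1) :=
    ENNReal.toReal_pos (measure_ball_pos volume 0 one_pos).ne' measure_ball_lt_top.ne
  refine ⟨_, by positivity, fun M A hM' hM _ hH t ht ht1 =>
    setLIntegral_compl_exp_neg_infDist_sq_le finrank_euclideanSpace_fin volume hM.isClosed hM' hH
      ht ht1⟩
end
end
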